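/- For every dimension n ≥ 1 and every θ > 0 there exist constants μ₀, τ₀, C, C₁, C₂ > 0 (with μ₀, τ₀, C depending only on n and C₁, C₂ depending only on n and θ) such that the following holds. Let Ω* be a normalized convex domain, w* ∈ C(closure Ω*) ∩ C²(Ω*) strictly convex with 1 − ε ≤ det D²w* ≤ 1 + ε in Ω*, w* = 0 on ∂Ω*, minimum at y₀; let 0 < h₀ ≤ μ₀ with C√h₀ ≤ 1/2, ε ≤ τ₀h₀² and √ε ≤ θ·h₀·ln(1/h₀)/(2C); let δ₀ = 0, δ_k = C(δ_{k−1}√h₀ + √ε/h₀), and let (A_k) be symmetric positive definite matrices satisfying B(0, √2(1 − δ_k)) ⊆ h₀^{−k/2}·A_k·(S_{h₀^k,w*}(y₀) − y₀) ⊆ B(0, √2(1 + δ_k)) together with the bounds (√c₁ ∏_{i=1}^{k−1}√(1 − Cδ_i))·I ≤ A_k ≤ (√c₂ ∏_{i=1}^{k−1}√(1 + Cδ_i))·I from the iteration. Then for all k ≥ 1: C₁·h₀^{θk}·I ≤ A_k ≤ C₂·h₀^{−θk/2}·I, and consequently C₂^{−1}·h₀^{θk/2}·I ≤ A_k^{−1}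 ≤ C₁^{−1}·h₀^{−θk}·I. -/

import Mathlib

open MeasureTheory Metric Set Real

noncomputable section

abbrev En (n : ℕ) : Type := EuclideanSpace ℝ (Fin n)

noncomputable def hess {n : ℕ} (w : En n → ℝ) (x : En n) : Matrix (Fin n) (Fin n) ℝ :=
  fun i j => iteratedFDeriv ℝ 2 w x ![EuclideanSpace.single i 1, EuclideanSpace.single j 1]

noncomputable def LMA {n : ℕ} (w u : En n → ℝ) (x : En n) : ℝ :=
  Matrix.trace ((hess w x).adjugate * hess u x)

def ViscSubsol {n : ℕ} (w u : En n → ℝ) (U : Set (En n)) : Prop :=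
  ∀ ψ : En n → ℝ, ContDiffOn ℝ 2 ψ U → ∀ x₀ ∈ U,
    IsLocalMaxOn (fun x => u x - ψ x) U x₀ → 0 ≤ LMA w ψ x₀

def ViscSupersol {n : ℕ} (w u : En n → ℝ) (U : Set (En n)) : Prop :=
  ∀ ψ : En n → ℝ, ContDiffOn ℝ 2 ψ U → ∀ x₀ ∈ U,
    IsLocalMinOn (fun x => u x - ψ x) U x₀ → LMA w ψ x₀ ≤ 0

def ViscSol {n : ℕ} (w u : En n → ℝ) (U : Set (En n)) : Prop :=
  ViscSubsol w u U ∧ ViscSupersol w u U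

def MASec {n : ℕ} (w : En n → ℝ) (Ω : Set (En n)) (x₀ : En n) (h : ℝ) : Set (En n) :=
  {x ∈ Ω | w x ≤ w x₀ + fderiv ℝ w x₀ (x - x₀) + h}

def MatLE {n : ℕ} (P Q : Matrix (Fin n) (Fin n) ℝ) : Prop := (Q - P).PosSemidef

def IsNormalized {n : ℕ} (Ω : Set (En n)) : Prop :=
  IsOpen Ω ∧ Convex ℝ Ω ∧ ball (0 : En n) 1 ⊆ Ω ∧ Ω ⊆ ball (0 : En n) n

/-!
With `C = 1` the recursion `δ_{k+1} = δ_k √h₀ + √ε / h₀` keeps `0 ≤ δ_k ≤ 2 √ε / h₀`, and the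
hypotheses on `ε` bound this by both `1/2` and `θ log (1/h₀)`. Since `1 - δ ≥ exp (-2δ)` on
`[0, 1/2]` and `1 + δ ≤ exp δ`, every factor `√(1 - δ_i)` is at least `h₀ ^ θ` and every factor
`√(1 + δ_i)` at most `h₀ ^ (-θ/2)`, so the products of `k - 1` factors give the bounds on `A_k`.
Inversion reverses the Loewner order, as one sees by conjugating with `A_k ^ (-1/2)`.
-/

open Finset
open scoped Matrix

lemma Real.exp_neg_two_mul_le_one_sub {x : ℝ} (h0 : 0 ≤ x) (h1 : x ≤ 1 / 2) :
    exp (-(2 * x)) ≤ 1 - x := by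
  have hpos : 0 < 1 - x := by linarith
  have hlog : -(2 * x) ≤ log (1 - x) := by
    refine le_trans ?_ (one_sub_inv_le_log_of_pos hpos)
    rw [le_sub_iff_add_le, ← le_sub_iff_add_le', inv_le_iff_one_le_mul₀ hpos]
    nlinarith
  simpa [exp_log hpos] using exp_le_exp.2 hlog

lemma Real.rpow_le_sqrt_one_sub {h θ δ : ℝ} (hh : 0 < h) (hδ0 : 0 ≤ δ) (hδ : δ ≤ 1 / 2)
    (hδθ : δ ≤ θ * log (1 / h)) : h ^ θ ≤ √(1 - δ) := by
  refine le_sqrt_of_sq_le ?_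
  rw [← rpow_natCast, ← rpow_mul hh.le, rpow_def_of_pos hh]
  rw [one_div, log_inv] at hδθ
  calc exp (log h * (θ * (2 : ℕ))) ≤ exp (-(2 * δ)) := by
        rw [exp_le_exp]
        push_cast
        linarith
    _ ≤ 1 - δ := exp_neg_two_mul_le_one_sub hδ0 hδ

lemma Real.sqrt_one_add_le_rpow {h θ δ : ℝ} (hh : 0 < h) (hδθ : δ ≤ θ * log (1 / h)) :
    √(1 + δ) ≤ h ^ (-θ / 2) := by
  refine sqrt_le_iff.2 ⟨by positivity, ?_⟩
  rw [← rpow_natCast, ← rpow_mul hh.le, rpow_def_of_pos hh]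
  rw [one_div, log_inv] at hδθ
  calc 1 + δ ≤ log h * (-θ / 2 * (2 : ℕ)) + 1 := by push_cast; linarith
    _ ≤ exp (log h * (-θ / 2 * (2 : ℕ))) := add_one_le_exp _

lemma Finset.pow_le_prod_of_card_le {ι : Type*} {s : Finset ι} {f : ι → ℝ} {a : ℝ} {k : ℕ}
    (ha0 : 0 ≤ a) (ha1 : a ≤ 1) (hs : #s ≤ k) (hf : ∀ i ∈ s, a ≤ f i) : a ^ k ≤ ∏ i ∈ s, f i :=
  calc a ^ k ≤ a ^ #s := pow_le_pow_of_le_one ha0 ha1 hs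
    _ = ∏ _i ∈ s, a := (prod_const a).symm
    _ ≤ ∏ i ∈ s, f i := prod_le_prod (fun _ _ => ha0) hf

lemma Finset.prod_le_pow_of_card_le {ι : Type*} {s : Finset ι} {f : ι → ℝ} {a : ℝ} {k : ℕ}
    (ha : 1 ≤ a) (hs : #s ≤ k) (hf0 : ∀ i ∈ s, 0 ≤ f i) (hf : ∀ i ∈ s, f i ≤ a) :
    ∏ i ∈ s, f i ≤ a ^ k :=
  calc ∏ i ∈ s, f i ≤ ∏ _i ∈ s, a := prod_le_prod hf0 hf
    _ = a ^ #s := prod_const a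
    _ ≤ a ^ k := pow_le_pow_right₀ ha hs

lemma Real.rpow_mul_le_prod_sqrt_one_sub {h θ : ℝ} {δ : ℕ → ℝ} (hh0 : 0 < h) (hh1 : h ≤ 1)
    (hθ : 0 ≤ θ) (hδ0 : ∀ i, 0 ≤ δ i) (hδ : ∀ i, δ i ≤ 1 / 2) (hδθ : ∀ i, δ i ≤ θ * log (1 / h))
    (k : ℕ) : h ^ (θ * k) ≤ ∏ i ∈ Icc 1 (k - 1), √(1 - δ i) := by
  rw [rpow_mul_natCast hh0.le]
  exact pow_le_prod_of_card_le (by positivity) (rpow_le_one hh0.le hh1 hθ) (by simp)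
    fun i _ => rpow_le_sqrt_one_sub hh0 (hδ0 i) (hδ i) (hδθ i)

lemma Real.prod_sqrt_one_add_le_rpow {h θ : ℝ} {δ : ℕ → ℝ} (hh0 : 0 < h) (hh1 : h ≤ 1)
    (hθ : 0 ≤ θ) (hδθ : ∀ i, δ i ≤ θ * log (1 / h)) (k : ℕ) :
    ∏ i ∈ Icc 1 (k - 1), √(1 + δ i) ≤ h ^ (-(θ * k) / 2) := by
  rw [show -(θ * k) / 2 = -θ / 2 * k by ring, rpow_mul_natCast hh0.le]
  exact prod_le_pow_of_card_le (one_le_rpow_of_pos_of_le_one_of_nonpos hh0 hh1 (by linarith))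
    (by simp) (fun _ _ => sqrt_nonneg _) fun i _ => sqrt_one_add_le_rpow hh0 (hδθ i)

lemma nonneg_and_le_two_mul_of_rec {δ : ℕ → ℝ} {q e : ℝ} (hq0 : 0 ≤ q) (hq : q ≤ 1 / 2)
    (he : 0 ≤ e) (h0 : δ 0 = 0) (hrec : ∀ k, δ (k + 1) = δ k * q + e) (k : ℕ) :
    0 ≤ δ k ∧ δ k ≤ 2 * e := by
  induction k with
  | zero => simp [h0, he]
  | succ k ih =>
    rw [hrec k]
    constructor
    · nlinarith
    · nlinarith

open scoped MatrixOrder in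
lemma Matrix.PosDef.exists_isHermitian_mul_self_eq_inv {m : ℕ} {A : Matrix (Fin m) (Fin m) ℝ}
    (hA : A.PosDef) :
    ∃ T : Matrix (Fin m) (Fin m) ℝ, T.IsHermitian ∧ T * T = A⁻¹ ∧ T * A * T = 1 := by
  set S := CFC.sqrt A
  have hSS : S * S = A := CFC.sqrt_mul_sqrt_self A hA.posSemidef.nonneg
  have hS : IsUnit S.det := by
    refine isUnit_iff_ne_zero.2 fun h => hA.det_pos.ne' ?_
    rw [← hSS, det_mul, h, zero_mul]
  refine ⟨S⁻¹, (nonneg_iff_posSemidef.1 (CFC.sqrt_nonneg A)).isHermitian.inv, ?_, ?_⟩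
  · rw [← hSS, mul_inv_rev]
  · rw [← hSS, ← Matrix.mul_assoc, nonsing_inv_mul S hS, Matrix.one_mul, mul_nonsing_inv S hS]

namespace MatLE

variable {m : ℕ} {A : Matrix (Fin m) (Fin m) ℝ}

lemma trans {P Q R : Matrix (Fin m) (Fin m) ℝ} (hPQ : MatLE P Q) (hQR : MatLE Q R) :
    MatLE P R := by
  simpa [MatLE, sub_add_sub_cancel] using hQR.add hPQ

lemma smul_one_of_le {r s : ℝ} (h : r ≤ s) :
    MatLE (r • (1 : Matrix (Fin m) (Fin m) ℝ)) (s • 1) := by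
  rw [MatLE, ← sub_smul]
  exact Matrix.PosSemidef.one.smul (sub_nonneg.2 h)

lemma smul_inv_le_inv (hA : A.PosDef) {b : ℝ} (hb : 0 < b) (h : MatLE A (b • 1)) :
    MatLE (b⁻¹ • 1) A⁻¹ := by
  obtain ⟨T, hT, hTT, hTAT⟩ := hA.exists_isHermitian_mul_self_eq_inv
  have hconj : A⁻¹ - b⁻¹ • 1 = T * (b⁻¹ • (b • 1 - A)) * Tᴴ := by
    rw [hT.eq, Matrix.mul_smul, Matrix.smul_mul, Matrix.mul_sub, Matrix.sub_mul, Matrix.mul_smul,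
      Matrix.smul_mul, Matrix.mul_one, hTT, hTAT, smul_sub, smul_smul, inv_mul_cancel₀ hb.ne',
      one_smul]
  rw [MatLE, hconj]
  exact (h.smul (inv_nonneg.2 hb.le)).mul_mul_conjTranspose_same T

lemma inv_le_inv_smul (hA : A.PosDef) {a : ℝ} (ha : 0 < a) (h : MatLE (a • 1) A) :
    MatLE A⁻¹ (a⁻¹ • 1) := by
  obtain ⟨T, hT, hTT, hTAT⟩ := hA.exists_isHermitian_mul_self_eq_inv
  have hconj : a⁻¹ • 1 - A⁻¹ = T * (a⁻¹ • (A - a • 1)) * Tᴴ := by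
    rw [hT.eq, Matrix.mul_smul, Matrix.smul_mul, Matrix.mul_sub, Matrix.sub_mul, Matrix.mul_smul,
      Matrix.smul_mul, Matrix.mul_one, hTT, hTAT, smul_sub, smul_smul, inv_mul_cancel₀ ha.ne',
      one_smul]
  rw [MatLE, hconj]
  exact (h.smul (inv_nonneg.2 ha.le)).mul_mul_conjTranspose_same T

end MatLE

theorem iteration_matrix_bounds_general
    (n : ℕ) :
    ∃ μ₀ τ₀ C : ℝ, 0 < μ₀ ∧ 0 < τ₀ ∧ 0 < C ∧
      ∀ θ : ℝ, 0 < θ → ∀ c₁ c₂ : ℝ, 0 < c₁ → 0 < c₂ →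
      ∃ C₁ C₂ : ℝ, 0 < C₁ ∧ 0 < C₂ ∧
        ∀ (Ω : Set (En n)), IsNormalized Ω →
        ∀ ε : ℝ, 0 ≤ ε →
        ∀ w : En n → ℝ, ContinuousOn w (closure Ω) → ContDiffOn ℝ 2 w Ω →
          StrictConvexOn ℝ (closure Ω) w →
          (∀ x ∈ Ω, 1 - ε ≤ (hess w x).det ∧ (hess w x).det ≤ 1 + ε) →
          (∀ x ∈ frontier Ω, w x = 0) →
        ∀ y₀ ∈ Ω, (∀ x ∈ closure Ω, w y₀ ≤ w x) →
        ∀ h₀ : ℝ, 0 < h₀ → h₀ ≤ μ₀ → C * Real.sqrt h₀ ≤ 1/2 →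
          ε ≤ τ₀ * h₀ ^ 2 → Real.sqrt ε ≤ θ * h₀ * Real.log (1/h₀) / (2 * C) →
        ∀ δ : ℕ → ℝ, δ 0 = 0 →
          (∀ k : ℕ, δ (k + 1) = C * (δ k * Real.sqrt h₀ + Real.sqrt ε / h₀)) →
        ∀ A : ℕ → Matrix (Fin n) (Fin n) ℝ,
          (∀ k : ℕ, 1 ≤ k → (A k).IsSymm ∧ (A k).PosDef ∧
            (ball (0 : En n) (Real.sqrt 2 * (1 - δ k)) ⊆
              (fun x => (Real.sqrt (h₀ ^ k))⁻¹ • Matrix.toEuclideanLin (A k) (x - y₀)) ''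
                MASec w Ω y₀ (h₀ ^ k)) ∧
            ((fun x => (Real.sqrt (h₀ ^ k))⁻¹ • Matrix.toEuclideanLin (A k) (x - y₀)) ''
                MASec w Ω y₀ (h₀ ^ k) ⊆
              ball (0 : En n) (Real.sqrt 2 * (1 + δ k))) ∧
            MatLE ((Real.sqrt c₁ * ∏ i ∈ Finset.Icc 1 (k - 1), Real.sqrt (1 - C * δ i)) •
              (1 : Matrix (Fin n) (Fin n) ℝ)) (A k) ∧
            MatLE (A k) ((Real.sqrt c₂ * ∏ i ∈ Finset.Icc 1 (k - 1),
              Real.sqrt (1 + C * δ i)) • (1 : Matrix (Fin n) (Fin n) ℝ))) →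
        ∀ k : ℕ, 1 ≤ k →
          MatLE ((C₁ * h₀ ^ (θ * k)) • (1 : Matrix (Fin n) (Fin n) ℝ)) (A k) ∧
          MatLE (A k) ((C₂ * h₀ ^ (-(θ * k) / 2)) • (1 : Matrix (Fin n) (Fin n) ℝ)) ∧
          MatLE ((C₂⁻¹ * h₀ ^ (θ * k / 2)) • (1 : Matrix (Fin n) (Fin n) ℝ)) (A k)⁻¹ ∧
          MatLE ((A k)⁻¹) ((C₁⁻¹ * h₀ ^ (-(θ * (k : ℝ)))) •
            (1 : Matrix (Fin n) (Fin n) ℝ)) := by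
  refine ⟨1 / 4, 1 / 16, 1, by norm_num, by norm_num, one_pos, fun θ hθ c₁ c₂ hc₁ hc₂ => ?_⟩
  refine ⟨√c₁, √c₂, sqrt_pos.2 hc₁, sqrt_pos.2 hc₂, ?_⟩
  intro Ω _ ε _ w _ _ _ _ _ y₀ _ _ h₀ hh₀ _ hC hτ hθε δ hδ0 hδrec A hA k hk
  rw [one_mul] at hC
  have hh₀1 : h₀ ≤ 1 := by nlinarith [sq_sqrt hh₀.le, sqrt_nonneg h₀]
  have he : √ε / h₀ ≤ 1 / 4 := by
    rw [div_le_iff₀ hh₀]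
    calc √ε ≤ √((h₀ / 4) ^ 2) := sqrt_le_sqrt (by linarith)
      _ = 1 / 4 * h₀ := by rw [sqrt_sq (by positivity)]; ring
  have heθ : √ε / h₀ ≤ θ * log (1 / h₀) / 2 := by
    rw [div_le_iff₀ hh₀]; linarith
  have hδ := nonneg_and_le_two_mul_of_rec (e := √ε / h₀) (sqrt_nonneg h₀) hC (by positivity) hδ0
    (fun k => by rw [hδrec, one_mul])
  obtain ⟨-, hApd, -, -, hAlo, hAhi⟩ := hA k hk
  simp only [one_mul] at hAlo hAhi
  have hprod_lo := rpow_mul_le_prod_sqrt_one_sub hh₀ hh₀1 hθ.le (fun i => (hδ i).1)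
    (fun i => by linarith [(hδ i).2]) (fun i => by linarith [(hδ i).2]) k
  have hprod_hi := prod_sqrt_one_add_le_rpow (δ := δ) hh₀ hh₀1 hθ.le
    (fun i => by linarith [(hδ i).2]) k
  have hlo : MatLE ((√c₁ * h₀ ^ (θ * k)) • 1) (A k) :=
    (MatLE.smul_one_of_le (by gcongr)).trans hAlo
  have hhi : MatLE (A k) ((√c₂ * h₀ ^ (-(θ * k) / 2)) • 1) :=
    hAhi.trans (MatLE.smul_one_of_le (by gcongr))
  refine ⟨hlo, hhi, ?_, ?_⟩
  · convert hhi.smul_inv_le_inv hApd (by positivity) using 3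
    rw [mul_inv, ← rpow_neg hh₀.le]; ring_nf
  · convert hlo.inv_le_inv_smul hApd (by positivity) using 3
    rw [mul_inv, ← rpow_neg hh₀.le]

/-- Bounds on the normalizing matrices `A_k` from the iteration:
`C₁ h₀^{θk} I ≤ A_k ≤ C₂ h₀^{-θk/2} I` and the corresponding bounds for `A_k⁻¹`. -/
theorem iteration_matrix_bounds
    (n : ℕ) (hn : 1 ≤ n) :
    ∃ μ₀ τ₀ C : ℝ, 0 < μ₀ ∧ 0 < τ₀ ∧ 0 < C ∧
      ∀ θ : ℝ, 0 < θ → ∀ c₁ c₂ : ℝ, 0 < c₁ → 0 < c₂ →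
      ∃ C₁ C₂ : ℝ, 0 < C₁ ∧ 0 < C₂ ∧
        ∀ (Ω : Set (En n)), IsNormalized Ω →
        ∀ ε : ℝ, 0 ≤ ε →
        ∀ w : En n → ℝ, ContinuousOn w (closure Ω) → ContDiffOn ℝ 2 w Ω →
          StrictConvexOn ℝ (closure Ω) w →
          (∀ x ∈ Ω, 1 - ε ≤ (hess w x).det ∧ (hess w x).det ≤ 1 + ε) →
          (∀ x ∈ frontier Ω, w x = 0) →
        ∀ y₀ ∈ Ω, (∀ x ∈ closure Ω, w y₀ ≤ w x) →
        ∀ h₀ : ℝ, 0 < h₀ → h₀ ≤ μ₀ → C * Real.sqrt h₀ ≤ 1/2 →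
          ε ≤ τ₀ * h₀ ^ 2 → Real.sqrt ε ≤ θ * h₀ * Real.log (1/h₀) / (2 * C) →
        ∀ δ : ℕ → ℝ, δ 0 = 0 →
          (∀ k : ℕ, δ (k + 1) = C * (δ k * Real.sqrt h₀ + Real.sqrt ε / h₀)) →
        ∀ A : ℕ → Matrix (Fin n) (Fin n) ℝ,
          (∀ k : ℕ, 1 ≤ k → (A k).IsSymm ∧ (A k).PosDef ∧
            (ball (0 : En n) (Real.sqrt 2 * (1 - δ k)) ⊆
              (fun x => (Real.sqrt (h₀ ^ k))⁻¹ • Matrix.toEuclideanLin (A k) (x - y₀)) ''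
                MASec w Ω y₀ (h₀ ^ k)) ∧
            ((fun x => (Real.sqrt (h₀ ^ k))⁻¹ • Matrix.toEuclideanLin (A k) (x - y₀)) ''
                MASec w Ω y₀ (h₀ ^ k) ⊆
              ball (0 : En n) (Real.sqrt 2 * (1 + δ k))) ∧
            MatLE ((Real.sqrt c₁ * ∏ i ∈ Finset.Icc 1 (k - 1), Real.sqrt (1 - C * δ i)) •
              (1 : Matrix (Fin n) (Fin n) ℝ)) (A k) ∧
            MatLE (A k) ((Real.sqrt c₂ * ∏ i ∈ Finset.Icc 1 (k - 1),
              Real.sqrt (1 + C * δ i)) • (1 : Matrix (Fin n) (Fin n) ℝ))) →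
        ∀ k : ℕ, 1 ≤ k →
          MatLE ((C₁ * h₀ ^ (θ * k)) • (1 : Matrix (Fin n) (Fin n) ℝ)) (A k) ∧
          MatLE (A k) ((C₂ * h₀ ^ (-(θ * k) / 2)) • (1 : Matrix (Fin n) (Fin n) ℝ)) ∧
          MatLE ((C₂⁻¹ * h₀ ^ (θ * k / 2)) • (1 : Matrix (Fin n) (Fin n) ℝ)) (A k)⁻¹ ∧
          MatLE ((A k)⁻¹) ((C₁⁻¹ * h₀ ^ (-(θ * (k : ℝ)))) •
            (1 : Matrix (Fin n) (Fin n) ℝ)) :=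
  iteration_matrix_bounds_general n
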